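/- For every mass m > 0 and all radii a, b > 0 with a ≠ b: if a < b then λ_pair(a,b;m) > 0, and if a > b then λ_pair(a,b;m) < 0. -/

import Mathlib

open Real BigOperators Finset

/-- The angle `θ_k = 2πk/ℓ`. -/
noncomputable def theta (ℓ k : ℕ) : ℝ := 2 * Real.pi * k / ℓ

/-- `λ_pair(a,b;m)`: contribution to the central-configuration multiplier felt by a body at
radius `a` coming from a ring of `ℓ` bodies of mass `m` at radius `b`. -/
noncomputable def lamPair (ℓ : ℕ) (m a b : ℝ) : ℝ :=
  -(m / a) * ∑ k ∈ Finset.range ℓ,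
    (a - b * Real.cos (theta ℓ k)) /
      (a ^ 2 + b ^ 2 - 2 * a * b * Real.cos (theta ℓ k)) ^ ((3 : ℝ) / 2)

lemma key_neg (ℓ : ℕ) (hℓ : 1 ≤ ℓ) (s : ℝ) (h0 : 0 < s) (h1 : s < 1) :
    ∑ k ∈ Finset.range ℓ, (s - Real.cos (theta ℓ k)) /
      (s ^ 2 - 2 * s * Real.cos (theta ℓ k) + 1) < 0 := by
  have hℓ0 : (ℓ : ℝ) ≠ 0 := by positivity
  have hℓ0' : (0:ℕ) < ℓ := hℓ
  set ζ : ℂ := Complex.exp ((2 * Real.pi / ℓ : ℝ) * Complex.I) with hζ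
  -- ζ^k is cos θ_k + sin θ_k I
  have hpow : ∀ k : ℕ, ζ ^ k =
      (Real.cos (theta ℓ k) : ℂ) + (Real.sin (theta ℓ k) : ℂ) * Complex.I := by
    intro k
    rw [← Complex.exp_nat_mul]
    have : (k : ℂ) * ((2 * Real.pi / ℓ : ℝ) * Complex.I) = ((theta ℓ k : ℝ) : ℂ) * Complex.I := by
      push_cast [theta]
      ring
    rw [this, Complex.exp_mul_I, ← Complex.ofReal_cos, ← Complex.ofReal_sin]
  have hζℓ : ζ ^ ℓ = 1 := by
    rw [← Complex.exp_nat_mul]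
    have hℓC : (ℓ : ℂ) ≠ 0 := by exact_mod_cast hℓ0
    have : (ℓ : ℂ) * ((2 * Real.pi / ℓ : ℝ) * Complex.I) = 2 * Real.pi * Complex.I := by
      push_cast
      field_simp
    rw [this, Complex.exp_two_pi_mul_I]
  -- ζ^m ≠ 1 for 0 < m < ℓ
  have hζm : ∀ m : ℕ, 0 < m → m < ℓ → ζ ^ m ≠ 1 := by
    intro m hm1 hm2 hcon
    rw [← Complex.exp_nat_mul, Complex.exp_eq_one_iff] at hcon
    obtain ⟨n, hn⟩ := hcon
    have h2C : ((2 * Real.pi * m / ℓ : ℝ) : ℂ) = ((n * (2 * Real.pi) : ℝ) : ℂ) := by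
      apply mul_right_cancel₀ Complex.I_ne_zero
      push_cast at hn ⊢
      linear_combination hn
    have h2 : (2 * Real.pi * m / ℓ : ℝ) = n * (2 * Real.pi) := by exact_mod_cast h2C
    have hpi : (0:ℝ) < Real.pi := Real.pi_pos
    have hl0 : (0:ℝ) < ℓ := by exact_mod_cast hℓ0'
    have hmn : (m : ℝ) = n * ℓ := by
      field_simp at h2
      nlinarith [h2]
    have hml : (m:ℝ) < ℓ := by exact_mod_cast hm2
    have hm0 : (0:ℝ) < m := by exact_mod_cast hm1
    rcases le_or_gt n 0 with h | h
    · have : (n:ℝ) ≤ 0 := by exact_mod_cast h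
      nlinarith
    · have : (1:ℝ) ≤ n := by exact_mod_cast h
      nlinarith
  -- the complex numbers s - ζ^k
  set z : ℕ → ℂ := fun k => (s : ℂ) - ζ ^ k with hzdef
  have hQ : ∀ k, Complex.normSq (z k) = s ^ 2 - 2 * s * Real.cos (theta ℓ k) + 1 := by
    intro k
    have hsc := Real.sin_sq_add_cos_sq (theta ℓ k)
    simp only [hzdef, hpow k, Complex.normSq_apply, Complex.sub_re, Complex.sub_im,
      Complex.add_re, Complex.add_im, Complex.ofReal_re, Complex.ofReal_im,
      Complex.mul_re, Complex.mul_im, Complex.I_re, Complex.I_im]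
    ring_nf
    nlinarith [hsc]
  have hQpos : ∀ k, 0 < s ^ 2 - 2 * s * Real.cos (theta ℓ k) + 1 := by
    intro k
    nlinarith [Real.cos_le_one (theta ℓ k), sq_nonneg (1 - s)]
  have hzne : ∀ k, z k ≠ 0 := by
    intro k
    have : 0 < Complex.normSq (z k) := by rw [hQ k]; exact hQpos k
    exact fun hcon => by simp [hcon] at this
  -- main identity
  have hid : ((s : ℂ) ^ ℓ - 1) * ∑ k ∈ Finset.range ℓ, (z k)⁻¹ = (ℓ : ℂ) * (s : ℂ) ^ (ℓ - 1) := by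
    rw [Finset.mul_sum]
    have hterm : ∀ k ∈ Finset.range ℓ, ((s : ℂ) ^ ℓ - 1) * (z k)⁻¹
        = ∑ j ∈ Finset.range ℓ, (s : ℂ) ^ j * (ζ ^ (ℓ - 1 - j)) ^ k := by
      intro k _
      have hζkℓ : (ζ ^ k) ^ ℓ = 1 := by rw [← pow_right_comm, hζℓ, one_pow]
      have hgeom := geom_sum₂_mul (s : ℂ) (ζ ^ k) ℓ
      rw [hζkℓ] at hgeom
      have : ((s : ℂ) ^ ℓ - 1) * (z k)⁻¹ = ∑ j ∈ Finset.range ℓ, (s : ℂ) ^ j * (ζ ^ k) ^ (ℓ - 1 - j) := by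
        rw [← hgeom, hzdef]
        simp only []
        rw [mul_assoc, mul_inv_cancel₀ (hzne k), mul_one]
      rw [this]
      refine Finset.sum_congr rfl fun j _ => ?_
      rw [pow_right_comm]
    rw [Finset.sum_congr rfl hterm, Finset.sum_comm]
    have hinner : ∀ j ∈ Finset.range ℓ, (∑ k ∈ Finset.range ℓ, (s : ℂ) ^ j * (ζ ^ (ℓ - 1 - j)) ^ k)
        = if j = ℓ - 1 then (ℓ : ℂ) * (s : ℂ) ^ (ℓ - 1) else 0 := by
      intro j hj
      rw [Finset.mem_range] at hj
      rw [← Finset.mul_sum]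
      by_cases hje : j = ℓ - 1
      · subst hje
        simp [Nat.sub_self, mul_comm]
      · have hm1 : 0 < ℓ - 1 - j := by omega
        have hm2 : ℓ - 1 - j < ℓ := by omega
        have hζmℓ : (ζ ^ (ℓ - 1 - j)) ^ ℓ = 1 := by rw [pow_right_comm, hζℓ, one_pow]
        rw [geom_sum_eq (hζm _ hm1 hm2), hζmℓ, if_neg hje]
        simp
    rw [Finset.sum_congr rfl hinner, Finset.sum_ite_eq' (Finset.range ℓ) (ℓ - 1)]
    rw [if_pos (Finset.mem_range.mpr (by omega))]
  -- value of the sum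
  have hsℓ : (s : ℝ) ^ ℓ - 1 < 0 := by
    have : s ^ ℓ < 1 := pow_lt_one₀ h0.le h1 (by omega)
    linarith
  have hdenne : ((s : ℂ) ^ ℓ - 1) ≠ 0 := by
    have : (((s ^ ℓ - 1 : ℝ)) : ℂ) ≠ 0 := by
      exact_mod_cast hsℓ.ne
    simpa using this
  have hsum : ∑ k ∈ Finset.range ℓ, (z k)⁻¹
      = (((ℓ : ℝ) * s ^ (ℓ - 1) / (s ^ ℓ - 1) : ℝ) : ℂ) := by
    push_cast
    rw [eq_div_iff hdenne]
    linear_combination hid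
  -- take real parts
  have hre : (∑ k ∈ Finset.range ℓ, (z k)⁻¹).re
      = ∑ k ∈ Finset.range ℓ, (s - Real.cos (theta ℓ k)) /
          (s ^ 2 - 2 * s * Real.cos (theta ℓ k) + 1) := by
    rw [Complex.re_sum]
    refine Finset.sum_congr rfl fun k _ => ?_
    rw [Complex.inv_re, hQ k]
    congr 1
    simp [hzdef, hpow k, Complex.cos_ofReal_re]
  rw [← hre, hsum, Complex.ofReal_re]
  apply div_neg_of_pos_of_neg
  · have : (0:ℝ) < ℓ := by exact_mod_cast hℓ0'
    positivity
  · exact hsℓ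


/-- The multiplier contribution from a ring at radius `b` on a body at radius `a` is
positive if `a < b` and negative if `a > b`. -/
theorem lamPair_sign (ℓ : ℕ) (hℓ : 2 ≤ ℓ) (m : ℝ) (hm : 0 < m)
    (a b : ℝ) (ha : 0 < a) (hb : 0 < b) (hab : a ≠ b) :
    (a < b → 0 < lamPair ℓ m a b) ∧ (b < a → lamPair ℓ m a b < 0) := by
  have hQpos : ∀ k, 0 < a ^ 2 + b ^ 2 - 2 * a * b * Real.cos (theta ℓ k) := by
    intro k
    have h1 := Real.cos_le_one (theta ℓ k)
    have h2 : (0:ℝ) < (a - b) ^ 2 := by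
      have : a - b ≠ 0 := sub_ne_zero.mpr hab
      positivity
    nlinarith [mul_pos ha hb]
  have hma : 0 < m / a := div_pos hm ha
  unfold lamPair
  constructor
  · intro hlt
    set c : ℕ → ℝ := fun k => Real.cos (theta ℓ k) with hc
    set Q : ℕ → ℝ := fun k => a ^ 2 + b ^ 2 - 2 * a * b * c k with hQdef
    set x : ℕ → ℝ := fun k => (b * c k - a) / Q k with hx
    set y : ℕ → ℝ := fun k => (Real.sqrt (Q k))⁻¹ with hy
    -- sum of x is positive via key_neg
    have hkey := key_neg ℓ (by omega) (a / b) (div_pos ha hb) ((div_lt_one hb).mpr hlt)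
    have hsx : 0 < ∑ k ∈ Finset.range ℓ, x k := by
      have hterm : ∀ k ∈ Finset.range ℓ, x k = (-(1/b)) *
          ((a / b - Real.cos (theta ℓ k)) /
            ((a / b) ^ 2 - 2 * (a / b) * Real.cos (theta ℓ k) + 1)) := by
        intro k _
        have hQk := hQpos k
        have hden : (a / b) ^ 2 - 2 * (a / b) * Real.cos (theta ℓ k) + 1
            = (a ^ 2 + b ^ 2 - 2 * a * b * Real.cos (theta ℓ k)) / b ^ 2 := by
          field_simp
          ring
        have hd2 : (a / b) ^ 2 - 2 * (a / b) * Real.cos (theta ℓ k) + 1 ≠ 0 := by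
          rw [hden]; positivity
        simp only [hx, hQdef, hc]
        rw [hden, div_div_eq_mul_div, mul_div_assoc', div_eq_div_iff hQk.ne' hQk.ne']
        field_simp
        ring
      rw [Finset.sum_congr rfl hterm, ← Finset.mul_sum]
      have hbinv : (0:ℝ) < 1/b := by positivity
      nlinarith [hkey]
    have hsy : 0 < ∑ k ∈ Finset.range ℓ, y k := by
      apply Finset.sum_pos
      · intro k _
        simp only [hy]
        exact inv_pos.mpr (Real.sqrt_pos.mpr (hQpos k))
      · exact Finset.nonempty_range_iff.mpr (by omega)
    -- monovariance
    have hmono : Monovary x y := by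
      intro i j hyij
      have hQi := hQpos i
      have hQj := hQpos j
      have hsi := Real.sqrt_pos.mpr hQi
      have hsj := Real.sqrt_pos.mpr hQj
      have h1 : Real.sqrt (Q j) < Real.sqrt (Q i) := by
        simp only [hy] at hyij
        exact (inv_lt_inv₀ hsi hsj).mp hyij
      have h2 : Q j < Q i := by
        by_contra hcon
        push_neg at hcon
        exact absurd (Real.sqrt_le_sqrt hcon) (not_le.mpr h1)
      have h3 : c i < c j := by
        simp only [hQdef] at h2
        nlinarith [mul_pos ha hb]
      simp only [hx]
      rw [div_le_div_iff₀ hQi hQj]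
      have hkey2 : (b * c j - a) * Q i - (b * c i - a) * Q j
          = b * (b ^ 2 - a ^ 2) * (c j - c i) := by
        simp only [hQdef]
        ring
      have hpos : 0 ≤ b * (b ^ 2 - a ^ 2) * (c j - c i) := by
        apply mul_nonneg
        apply mul_nonneg hb.le
        · nlinarith
        · linarith
      linarith
    -- Chebyshev
    have cheb : (∑ k ∈ Finset.range ℓ, x k) * ∑ k ∈ Finset.range ℓ, y k
        ≤ (Finset.range ℓ).card * ∑ k ∈ Finset.range ℓ, x k * y k :=
      (hmono.monovaryOn _).sum_mul_sum_le_card_mul_sum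
    have hcard : ((Finset.range ℓ).card : ℝ) = (ℓ : ℝ) := by simp
    have hxy : 0 < ∑ k ∈ Finset.range ℓ, x k * y k := by
      have hl0 : (0:ℝ) < (ℓ : ℝ) := by exact_mod_cast (by omega : 0 < ℓ)
      rw [hcard] at cheb
      nlinarith [mul_pos hsx hsy]
    -- rewrite the target sum
    have hconv : ∀ k ∈ Finset.range ℓ,
        (a - b * Real.cos (theta ℓ k)) /
          (a ^ 2 + b ^ 2 - 2 * a * b * Real.cos (theta ℓ k)) ^ ((3 : ℝ) / 2)
        = -(x k * y k) := by
      intro k _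
      have hQk := hQpos k
      have h32 : (a ^ 2 + b ^ 2 - 2 * a * b * Real.cos (theta ℓ k)) ^ ((3 : ℝ) / 2)
          = Q k * Real.sqrt (Q k) := by
        rw [show (3:ℝ)/2 = 1 + 1/2 by norm_num, Real.rpow_add hQk, Real.rpow_one,
          ← Real.sqrt_eq_rpow]
      rw [h32]
      have hsq : Real.sqrt (Q k) ≠ 0 := (Real.sqrt_pos.mpr hQk).ne'
      simp only [hx, hy, hQdef, hc]
      field_simp
      try ring
    rw [Finset.sum_congr rfl hconv, Finset.sum_neg_distrib]
    nlinarith [hxy]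
  · intro hlt
    have hS : 0 < ∑ k ∈ Finset.range ℓ, (a - b * Real.cos (theta ℓ k)) /
        (a ^ 2 + b ^ 2 - 2 * a * b * Real.cos (theta ℓ k)) ^ ((3 : ℝ) / 2) := by
      apply Finset.sum_pos
      · intro k _
        apply div_pos
        · nlinarith [Real.cos_le_one (theta ℓ k)]
        · exact Real.rpow_pos_of_pos (hQpos k) _
      · exact Finset.nonempty_range_iff.mpr (by omega)
    nlinarith
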